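/- arXiv:2210.05340 — 2 statements merged into one kernel-verified Lean document; each statement's English description precedes it below -/
import Mathlib

section
/- Under the stated hypotheses (joint independence, zero means, E[|X_n|²] = E[|Y_n|²] = 1 for all n, and E[X_n²] = ψ for all n ∈ W), the total Case II contribution satisfies Σ_{l ∈ W} Σ_{m ∈ W} E[ ( conj(s)·X_l + conj(Y_0)·Y_l )·X_m ]·S(0,l,m) + Σ_{k ∈ W} Σ_{m ∈ W} E[ ( conj(X_k)·s + conj(Y_k)·Y_0 )·X_m ]·S(k,0,m) + Σ_{k ∈ W} Σ_{l ∈ W} E[ ( conj(X_k)·X_l + conj(Y_k)·Y_l )·s ]·S(k,l,0) = Σ_{k ∈ W} [ s·( 2·S(k,k,0) + S(k,0,k) ) + conj(s)·ψ·S(0,k,k) ]. -/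
/-!
Expanding each expectation by linearity, every term becomes a moment of the jointly independent,
centred family `X, Y`. Such a moment vanishes as soon as one factor is centred and independent of
the others, so only the diagonal terms survive, where `E[conj X_k X_k] = E[conj Y_k Y_k] = 1` and
`E[X_k X_k] = ψ`. Each double sum therefore collapses to a single sum over `W`.
-/

open MeasureTheory ProbabilityTheory ComplexConjugate Finset

lemma Finset.sum_sum_mul_eq_sum_diag {ι R : Type*} [DecidableEq ι] [NonUnitalNonAssocSemiring R]
    {s : Finset ι} {a T : ι → ι → R} {c : ι → R}
    (ha : ∀ i ∈ s, ∀ j ∈ s, a i j = if i = j then c i else 0) :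
    ∑ i ∈ s, ∑ j ∈ s, a i j * T i j = ∑ i ∈ s, c i * T i i := by
  refine sum_congr rfl fun i hi => ?_
  rw [sum_congr rfl fun j hj => by rw [ha i hi j hj, ite_mul, zero_mul], sum_ite_eq, if_pos hi]

namespace MeasureTheory

variable {Ω 𝕜 : Type*} [MeasurableSpace Ω] {μ : Measure Ω} [RCLike 𝕜]

lemma MemLp.conj {p : ENNReal} {f : Ω → 𝕜} (hf : MemLp f p μ) :
    MemLp (fun ω => conj (f ω)) p μ :=
  hf.star

lemma integral_add_mul_of_memLp_top [IsFiniteMeasure μ] {f g h : Ω → 𝕜} (hf : MemLp f ⊤ μ)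
    (hg : MemLp g ⊤ μ) (hh : MemLp h ⊤ μ) :
    ∫ ω, (f ω + g ω) * h ω ∂μ = ∫ ω, f ω * h ω ∂μ + ∫ ω, g ω * h ω ∂μ := by
  simp_rw [add_mul]
  exact integral_add ((hh.mul' hf).integrable le_top) ((hh.mul' hg).integrable le_top)

lemma integral_conj_mul_self (f : Ω → 𝕜) :
    ∫ ω, conj (f ω) * f ω ∂μ = ((∫ ω, ‖f ω‖ ^ 2 ∂μ : ℝ) : 𝕜) := by
  simp_rw [RCLike.conj_mul, ← RCLike.ofReal_pow]
  exact integral_ofReal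

end MeasureTheory

namespace ProbabilityTheory

variable {Ω ι 𝕜 : Type*} [MeasurableSpace Ω] {μ : Measure Ω} [RCLike 𝕜]

lemma IndepFun.integral_conj_mul {f g : Ω → 𝕜} (h : IndepFun f g μ) (hf : AEMeasurable f μ)
    (hg : AEMeasurable g μ) :
    ∫ ω, conj (f ω) * g ω ∂μ = conj (∫ ω, f ω ∂μ) * ∫ ω, g ω ∂μ := by
  rw [← integral_conj]
  exact h.integral_fun_comp_mul_comp (f := conj) (g := id) hf hg
    RCLike.continuous_conj.aestronglyMeasurable aestronglyMeasurable_id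

structure IsIndepStandardFamily (F : ι → Ω → 𝕜) (μ : Measure Ω) : Prop where
  indep : iIndepFun F μ
  memLp : ∀ i, MemLp (F i) ⊤ μ
  integral_eq_zero : ∀ i, ∫ ω, F i ω ∂μ = 0
  integral_norm_sq : ∀ i, ∫ ω, ‖F i ω‖ ^ 2 ∂μ = 1

namespace IsIndepStandardFamily

variable {F : ι → Ω → 𝕜}

lemma aemeasurable (hF : IsIndepStandardFamily F μ) (i : ι) : AEMeasurable (F i) μ :=
  (hF.memLp i).aestronglyMeasurable.aemeasurable

lemma integral_mul_of_ne (hF : IsIndepStandardFamily F μ) {i j : ι} (hij : i ≠ j) :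
    ∫ ω, F i ω * F j ω ∂μ = 0 := by
  rw [(hF.indep.indepFun hij).integral_fun_mul_eq_mul_integral (hF.memLp i).1 (hF.memLp j).1,
    hF.integral_eq_zero j, mul_zero]

lemma integral_conj_mul [DecidableEq ι] (hF : IsIndepStandardFamily F μ) (i j : ι) :
    ∫ ω, conj (F i ω) * F j ω ∂μ = if i = j then 1 else 0 := by
  split_ifs with hij
  · rw [hij, integral_conj_mul_self, hF.integral_norm_sq, RCLike.ofReal_one]
  · rw [(hF.indep.indepFun hij).integral_conj_mul (hF.aemeasurable i) (hF.aemeasurable j),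
      hF.integral_eq_zero j, mul_zero]

lemma integral_conj_mul_mul_of_ne (hF : IsIndepStandardFamily F μ) {i j k : ι} (hik : i ≠ k)
    (hjk : j ≠ k) : ∫ ω, conj (F i ω) * F j ω * F k ω ∂μ = 0 := by
  have h := (hF.indep.indepFun_prodMk₀ hF.aemeasurable i j k hik hjk).integral_fun_comp_mul_comp
    (f := fun p : 𝕜 × 𝕜 => conj p.1 * p.2) (g := id)
    ((hF.aemeasurable i).prodMk (hF.aemeasurable j)) (hF.aemeasurable k)
    ((RCLike.continuous_conj.comp continuous_fst).mul continuous_snd).aestronglyMeasurable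
    aestronglyMeasurable_id
  simpa only [id, hF.integral_eq_zero k, mul_zero] using h

lemma integral_add_conj_mul_mul (hF : IsIndepStandardFamily F μ) {f : Ω → 𝕜} (hf : MemLp f ⊤ μ)
    {i j k : ι} (hik : i ≠ k) (hjk : j ≠ k) :
    ∫ ω, (f ω + conj (F i ω) * F j ω) * F k ω ∂μ = ∫ ω, f ω * F k ω ∂μ := by
  have := hF.indep.isProbabilityMeasure
  rw [integral_add_mul_of_memLp_top hf ((hF.memLp j).mul' (hF.memLp i).conj) (hF.memLp k),
    hF.integral_conj_mul_mul_of_ne hik hjk, add_zero]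

end IsIndepStandardFamily
end ProbabilityTheory

section CaseII

/- The symbol `s` plays the role of `X 0`: these lemmas compute
`E[(conj X_k X_l + conj Y_k Y_l) X_m]` when exactly one of `k, l, m` is `0`. -/

variable {Ω : Type*} [MeasurableSpace Ω] {μ : Measure Ω} {W I : Finset ℤ} {X Y : ℤ → Ω → ℂ}

lemma caseII_moment_of_fst_eq_zero
    (hF : IsIndepStandardFamily (Sum.elim (fun n : W => X n) (fun n : I => Y n)) μ)
    (hWI : W ⊆ I) {ψ : ℂ} (hXsq : ∀ n ∈ W, ∫ ω, X n ω ^ 2 ∂μ = ψ) (c : ℂ) {a l m : ℤ}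
    (ha : a ∈ I) (hl : l ∈ W) (hm : m ∈ W) :
    ∫ ω, (c * X l ω + conj (Y a ω) * Y l ω) * X m ω ∂μ = if l = m then c * ψ else 0 := by
  have hsplit := hF.integral_add_conj_mul_mul ((hF.memLp (.inl ⟨l, hl⟩)).const_mul c)
    (i := .inr ⟨a, ha⟩) (j := .inr ⟨l, hWI hl⟩) (k := .inl ⟨m, hm⟩) (by simp) (by simp)
  simp only [Sum.elim_inl, Sum.elim_inr] at hsplit
  simp_rw [hsplit, mul_assoc, integral_const_mul]
  split_ifs with hlm
  · simp_rw [hlm, ← sq, hXsq m hm]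
  · have hXX := hF.integral_mul_of_ne (i := .inl ⟨l, hl⟩) (j := .inl ⟨m, hm⟩) (by simpa)
    simp only [Sum.elim_inl] at hXX
    rw [hXX, mul_zero]

lemma caseII_moment_of_snd_eq_zero
    (hF : IsIndepStandardFamily (Sum.elim (fun n : W => X n) (fun n : I => Y n)) μ)
    (hWI : W ⊆ I) (c : ℂ) {a k m : ℤ} (ha : a ∈ I) (hk : k ∈ W) (hm : m ∈ W) :
    ∫ ω, (conj (X k ω) * c + conj (Y k ω) * Y a ω) * X m ω ∂μ = if k = m then c else 0 := by
  have hsplit := hF.integral_add_conj_mul_mul ((hF.memLp (.inl ⟨k, hk⟩)).conj.mul_const c)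
    (i := .inr ⟨k, hWI hk⟩) (j := .inr ⟨a, ha⟩) (k := .inl ⟨m, hm⟩) (by simp) (by simp)
  have hXX := hF.integral_conj_mul (.inl ⟨k, hk⟩) (.inl ⟨m, hm⟩)
  simp only [Sum.elim_inl, Sum.elim_inr, Sum.inl.injEq, Subtype.mk.injEq] at hsplit hXX
  simp_rw [hsplit, mul_right_comm _ c, integral_mul_const, hXX, ite_mul, one_mul, zero_mul]

lemma caseII_moment_of_thd_eq_zero
    (hF : IsIndepStandardFamily (Sum.elim (fun n : W => X n) (fun n : I => Y n)) μ)
    (hWI : W ⊆ I) (c : ℂ) {k l : ℤ} (hk : k ∈ W) (hl : l ∈ W) :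
    ∫ ω, (conj (X k ω) * X l ω + conj (Y k ω) * Y l ω) * c ∂μ = if k = l then 2 * c else 0 := by
  have := hF.indep.isProbabilityMeasure
  have hXX := hF.integral_conj_mul (.inl ⟨k, hk⟩) (.inl ⟨l, hl⟩)
  have hYY := hF.integral_conj_mul (.inr ⟨k, hWI hk⟩) (.inr ⟨l, hWI hl⟩)
  simp only [Sum.elim_inl, Sum.elim_inr, Sum.inl.injEq, Sum.inr.injEq, Subtype.mk.injEq]
    at hXX hYY
  have hX (n) (hn : n ∈ W) : MemLp (X n) ⊤ μ := hF.memLp (.inl ⟨n, hn⟩)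
  have hY (n) (hn : n ∈ W) : MemLp (Y n) ⊤ μ := hF.memLp (.inr ⟨n, hWI hn⟩)
  rw [integral_add_mul_of_memLp_top ((hX l hl).mul' (hX k hk).conj)
    ((hY l hl).mul' (hY k hk).conj) (memLp_top_const c),
    integral_mul_const, integral_mul_const, hXX, hYY]
  split_ifs <;> ring

end CaseII

/-- The total Case II contribution in the proof of Theorem 1, combining
equations (30) through (36). -/
theorem frp_caseII_total
    {Ω : Type*} [MeasurableSpace Ω] (μ : MeasureTheory.Measure Ω) [MeasureTheory.IsProbabilityMeasure μ]
    (M : ℤ) (hM : 1 ≤ M)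
    (W : Finset ℤ) (hW : W = (Finset.Icc (-M) M).erase 0)
    (X Y : ℤ → Ω → ℂ)
    (hXbd : ∀ n ∈ W, MeasureTheory.MemLp (X n) ⊤ μ)
    (hYbd : ∀ n ∈ Finset.Icc (-M) M, MeasureTheory.MemLp (Y n) ⊤ μ)
    (hindep : ProbabilityTheory.iIndepFun
      (Sum.elim (fun n : {n : ℤ // n ∈ W} => X n.1)
                (fun n : {n : ℤ // n ∈ Finset.Icc (-M) M} => Y n.1)) μ)
    (hXmean : ∀ n ∈ W, ∫ ω, X n ω ∂μ = 0)
    (hYmean : ∀ n ∈ Finset.Icc (-M) M, ∫ ω, Y n ω ∂μ = 0)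
    (s : ℂ)
    (hX2 : ∀ n ∈ W, ∫ ω, ‖X n ω‖ ^ 2 ∂μ = 1)
    (hY2 : ∀ n ∈ Finset.Icc (-M) M, ∫ ω, ‖Y n ω‖ ^ 2 ∂μ = 1)
    (ψ : ℂ) (hXsq : ∀ n ∈ W, ∫ ω, (X n ω) ^ 2 ∂μ = ψ)
    (S : ℤ → ℤ → ℤ → ℂ) :
    (∑ l ∈ W, ∑ m ∈ W,
        (∫ ω, ((starRingEnd ℂ) s * X l ω + (starRingEnd ℂ) (Y 0 ω) * Y l ω) * X m ω ∂μ) * S 0 l m)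
      + (∑ k ∈ W, ∑ m ∈ W,
        (∫ ω, ((starRingEnd ℂ) (X k ω) * s + (starRingEnd ℂ) (Y k ω) * Y 0 ω) * X m ω ∂μ) * S k 0 m)
      + (∑ k ∈ W, ∑ l ∈ W,
        (∫ ω, ((starRingEnd ℂ) (X k ω) * X l ω + (starRingEnd ℂ) (Y k ω) * Y l ω) * s ∂μ) * S k l 0)
      = ∑ k ∈ W, (s * (2 * S k k 0 + S k 0 k) + (starRingEnd ℂ) s * ψ * S 0 k k) := by
  have hF : IsIndepStandardFamily (Sum.elim (fun n : W => X n) (fun n : Icc (-M) M => Y n)) μ :=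
    { indep := hindep
      memLp := by rintro (⟨n, hn⟩ | ⟨n, hn⟩); exacts [hXbd n hn, hYbd n hn]
      integral_eq_zero := by rintro (⟨n, hn⟩ | ⟨n, hn⟩); exacts [hXmean n hn, hYmean n hn]
      integral_norm_sq := by rintro (⟨n, hn⟩ | ⟨n, hn⟩); exacts [hX2 n hn, hY2 n hn] }
  have hWI : W ⊆ Icc (-M) M := hW ▸ erase_subset _ _
  have h0 : (0 : ℤ) ∈ Icc (-M) M := mem_Icc.2 ⟨by omega, by omega⟩
  rw [sum_sum_mul_eq_sum_diag fun l hl m hm =>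
      caseII_moment_of_fst_eq_zero hF hWI hXsq (conj s) h0 hl hm,
    sum_sum_mul_eq_sum_diag fun k hk m hm => caseII_moment_of_snd_eq_zero hF hWI s h0 hk hm,
    sum_sum_mul_eq_sum_diag fun k hk l hl => caseII_moment_of_thd_eq_zero hF hWI s hk hl,
    ← sum_add_distrib, ← sum_add_distrib]
  exact sum_congr rfl fun k _ => by ring
end

section
/- Fix ŝ ∈ ℂ^L and α > 0, let u = Tᴴ·( a + c·(T ŝ) − r ), and assume u_j ≠ 0 for every component j. Let g ∈ ℂ^L denote the gradient of f at ŝ with respect to the real inner product Re⟪·,·⟫ on ℂ^L. Then g_j ≠ 0 for every j, and the normalized gradient descent update satisfies, componentwise, ŝ_j − α·g_j/|g_j| = ŝ_j + i·α·u_j/|u_j| for every j; that is, ŝ − α·g ⊘ |g| = ŝ + i·α·u ⊘ |u|, where ⊘ denotes element-wise division and |·| the element-wise complex absolute value. -/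
/-- Reinterpret a plain tuple of complex numbers as an element of the
Euclidean (ℓ²) space, so that matrix-vector products land in the right space. -/
noncomputable def toEuc {n : ℕ} (x : Fin n → ℂ) : EuclideanSpace ℂ (Fin n) :=
  (WithLp.equiv 2 (Fin n → ℂ)).symm x

/-!
The real derivative of `s ↦ μ‖y + A s‖²`, for `A` complex-linear, is
`v ↦ 2μ Re⟪y + A s, A v⟫ = Re⟪2μ A†(y + A s), v⟫`, so its gradient for `Re⟪·,·⟫` is
`2μ A†(y + A s)`. For the MSE objective `A = c T`, so the gradient is `g = (c̄ / B) u`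
with `c̄ / B = -i t`, `t > 0`. Multiplying by a positive real does not change the phase
`z / |z|`, hence `gⱼ / |gⱼ| = -i uⱼ / |uⱼ|`.
-/

open ContinuousLinearMap ComplexConjugate
open scoped InnerProduct Matrix

section Gradient

variable {E F : Type*} [NormedAddCommGroup E] [InnerProductSpace ℂ E]
  [NormedAddCommGroup F] [InnerProductSpace ℂ F]

theorem eq_of_forall_re_inner_eq {x y : E}
    (h : ∀ v, (inner ℂ x v).re = (inner ℂ y v).re) : x = y :=
  letI := InnerProductSpace.complexToReal (G := E)
  ext_inner_right ℝ h

theorem eq_adjoint_of_fderiv_mul_norm_sq_eq_re_inner [CompleteSpace E] [CompleteSpace F]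
    (μ : ℝ) (y : F) (A : E →L[ℂ] F) (s g : E)
    (hg : ∀ v, fderiv ℝ (fun s => μ * ‖y + A s‖ ^ 2) s v = (inner ℂ g v).re) :
    g = ((2 * μ : ℝ) : ℂ) • (A†) (y + A s) := by
  let := InnerProductSpace.complexToReal (G := F)
  have hA : HasFDerivAt (fun s => y + A s) (A.restrictScalars ℝ) s :=
    (A.restrictScalars ℝ).hasFDerivAt.const_add y
  refine eq_of_forall_re_inner_eq fun v => ?_
  rw [← hg, (hA.norm_sq.const_mul μ).fderiv]
  simp [real_inner_eq_re_inner ℂ, adjoint_inner_left]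
  ring

end Gradient

theorem Complex.mul_div_norm_mul (z w : ℂ) : z * w / ‖z * w‖ = z / ‖z‖ * (w / ‖w‖) := by
  rw [norm_mul, Complex.ofReal_mul, mul_div_mul_comm]

theorem Complex.ofReal_div_norm_of_pos {t : ℝ} (ht : 0 < t) : (t : ℂ) / ‖(t : ℂ)‖ = 1 := by
  rw [Complex.norm_real, Real.norm_of_nonneg ht.le, div_self (by exact_mod_cast ht.ne')]

theorem nbgd_descent_step_general
    (B L : ℕ) (hB : 0 < B)
    (T : Matrix (Fin B) (Fin L) ℂ)
    (a r : EuclideanSpace ℂ (Fin B))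
    (γ Es : ℝ) (hγ : 0 < γ) (hEs : 0 < Es)
    (c : ℂ) (hc : c = Complex.I * (8 / 9) * (γ : ℂ) * (Es : ℂ))
    (f : EuclideanSpace ℂ (Fin L) → ℝ)
    (hf : ∀ shat : EuclideanSpace ℂ (Fin L),
      f shat = (1 / (2 * (B : ℝ))) * ‖a + c • toEuc (T.mulVec shat) - r‖ ^ 2)
    (shat : EuclideanSpace ℂ (Fin L))
    (α : ℝ)
    (u : EuclideanSpace ℂ (Fin L))
    (hu : u = toEuc (T.conjTranspose.mulVec (a + c • toEuc (T.mulVec shat) - r)))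
    (hunz : ∀ j : Fin L, u j ≠ 0)
    (g : EuclideanSpace ℂ (Fin L))
    (hg : ∀ v : EuclideanSpace ℂ (Fin L), fderiv ℝ f shat v = (inner ℂ g v : ℂ).re) :
    ∀ j : Fin L, g j ≠ 0 ∧
      shat j - (α : ℂ) * (g j / (‖g j‖ : ℂ))
        = shat j + Complex.I * (α : ℂ) * (u j / (‖u j‖ : ℂ)) := by
  set A : EuclideanSpace ℂ (Fin L) →L[ℂ] EuclideanSpace ℂ (Fin B) :=
    c • LinearMap.toContinuousLinearMap (Matrix.toEuclideanLin T)
  have hfA : f = fun s => 1 / (2 * (B : ℝ)) * ‖(a - r) + A s‖ ^ 2 := by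
    funext s
    rw [hf, add_sub_right_comm]
    rfl
  have hA : ∀ x, (A†) x = conj c • Matrix.toEuclideanLin Tᴴ x := by
    simp [A, map_smulₛₗ, ← LinearMap.adjoint_toContinuousLinearMap,
      Matrix.toEuclideanLin_conjTranspose_eq_adjoint]
  have hgu : g = (conj c / B) • u := by
    rw [hfA] at hg
    rw [eq_adjoint_of_fderiv_mul_norm_sq_eq_re_inner _ _ _ _ _ hg, hA, hu, smul_smul,
      add_sub_right_comm]
    congr 1
    push_cast
    ring
  intro j
  obtain ⟨t, ht, hκ⟩ : ∃ t : ℝ, 0 < t ∧ conj c / B = -Complex.I * t := by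
    refine ⟨8 / 9 * γ * Es / B, by positivity, ?_⟩
    rw [hc]
    simp only [map_mul, Complex.conj_I, Complex.conj_ofReal, map_div₀, map_ofNat]
    push_cast
    ring
  have hgj : g j = -Complex.I * t * u j := by rw [hgu, ← hκ]; rfl
  refine ⟨by rw [hgj]; exact mul_ne_zero (by simp [ht.ne']) (hunz j), ?_⟩
  rw [hgj, Complex.mul_div_norm_mul, Complex.mul_div_norm_mul, Complex.ofReal_div_norm_of_pos ht,
    norm_neg, Complex.norm_I, Complex.ofReal_one]
  ring

/-- Theorem 2 of the paper: the normalized batch gradient descent (NBGD) step for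
the batch MSE objective, equation (25).  With u = Tᴴ(a + c·Tŝ − r) componentwise
nonzero and g the gradient of f at ŝ with respect to the real inner product
Re⟪·,·⟫, every component of g is nonzero and the normalized gradient descent
update satisfies ŝⱼ − α·gⱼ/|gⱼ| = ŝⱼ + i·α·uⱼ/|uⱼ|. -/
theorem nbgd_descent_step
    (B L : ℕ) (hB : 0 < B) (hL : 0 < L)
    (T : Matrix (Fin B) (Fin L) ℂ)
    (a r : EuclideanSpace ℂ (Fin B))
    (γ Es : ℝ) (hγ : 0 < γ) (hEs : 0 < Es)
    (c : ℂ) (hc : c = Complex.I * (8 / 9) * (γ : ℂ) * (Es : ℂ))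
    (f : EuclideanSpace ℂ (Fin L) → ℝ)
    (hf : ∀ shat : EuclideanSpace ℂ (Fin L),
      f shat = (1 / (2 * (B : ℝ))) * ‖a + c • toEuc (T.mulVec shat) - r‖ ^ 2)
    (shat : EuclideanSpace ℂ (Fin L))
    (α : ℝ) (hα : 0 < α)
    (u : EuclideanSpace ℂ (Fin L))
    (hu : u = toEuc (T.conjTranspose.mulVec (a + c • toEuc (T.mulVec shat) - r)))
    (hunz : ∀ j : Fin L, u j ≠ 0)
    (g : EuclideanSpace ℂ (Fin L))
    (hg : ∀ v : EuclideanSpace ℂ (Fin L), fderiv ℝ f shat v = (inner ℂ g v : ℂ).re) :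
    ∀ j : Fin L, g j ≠ 0 ∧
      shat j - (α : ℂ) * (g j / (‖g j‖ : ℂ))
        = shat j + Complex.I * (α : ℂ) * (u j / (‖u j‖ : ℂ)) :=
  nbgd_descent_step_general B L hB T a r γ Es hγ hEs c hc f hf shat α u hu hunz g hg
end
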